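/- Let n ≥ 1 be an integer and a > 0. For ε > 0 set b = −(2 + ε)a and α*ₙ(ε) = (ε/n)^{1/3}. Then as ε → 0⁺, the modulus of the OWR convergence factor with overlap n at s = 0 and β = −α*ₙ satisfies |ρ_n(0, α*ₙ(ε), −α*ₙ(ε))| = 1 − 4 n^{1/3} ε^{1/6} + O(ε^{1/3}); that is, there exist constants C, ε₀ > 0 such that ||ρ_n(0, α*ₙ(ε), −α*ₙ(ε))| − (1 − 4 n^{1/3} ε^{1/6})| ≤ C ε^{1/3} for all 0 < ε < ε₀. -/

import Mathlib

/-!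
Put `ε = t⁶` and `m = n^{1/3}`, so that `α*ₙ = t²/m`. Writing `λ₁(0) = 1 + μ` one has
`t³ ≤ μ ≤ t³ + t⁶`, and the first factor of `ρ_n` becomes `(1 - x) / (1 + x + μ)` with
`x = μ/α*ₙ = m t + O(t⁴)`. Its square is `1 - 4x + O(x² + μ) = 1 - 4 m t + O(t²)`, while by
Bernoulli's inequality `(1/λ₁(0)²)ⁿ = 1 + O(n μ) = 1 + O(t³)`. All errors are `O(t²) = O(ε^{1/3})`.
-/

/-- `λ₁(0) = (2 + ε + √(4ε + ε²))/2`, the real root greater than 1 of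
`a y² + b y + a = 0` with `b = -(2 + ε)a`. -/
noncomputable def lam1Zero (ε : ℝ) : ℝ :=
  (2 + ε + Real.sqrt (4 * ε + ε ^ 2)) / 2

lemma lam1Zero_pow_six_sub_one_mem_Icc {t : ℝ} (ht : 0 ≤ t) :
    lam1Zero (t ^ 6) - 1 ∈ Set.Icc (t ^ 3) (t ^ 3 + t ^ 6) := by
  have hlo : 2 * t ^ 3 ≤ √(4 * t ^ 6 + (t ^ 6) ^ 2) :=
    (Real.le_sqrt (by positivity) (by positivity)).2 (by nlinarith [pow_nonneg ht 12])
  have hhi : √(4 * t ^ 6 + (t ^ 6) ^ 2) ≤ 2 * t ^ 3 + t ^ 6 :=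
    Real.sqrt_le_iff.2 ⟨by positivity, by nlinarith [pow_nonneg ht 9]⟩
  constructor <;> unfold lam1Zero <;> linarith [pow_nonneg ht 6]

/-- `ρ_n(0, α, -α) = reflectionRatio α λ₁(0) ^ 2 * (1 / λ₁(0) ^ 2) ^ n`. -/
noncomputable def reflectionRatio (α lam : ℝ) : ℝ :=
  (α + 1 - lam) / ((1 + α) * lam - 1)

lemma reflectionRatio_one_add {α : ℝ} (μ : ℝ) (hα : α ≠ 0) :
    reflectionRatio α (1 + μ) = (1 - μ / α) / (1 + μ / α + μ) := by
  have hnum : α + 1 - (1 + μ) = α * (1 - μ / α) := by field_simp; ring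
  have hden : (1 + α) * (1 + μ) - 1 = α * (1 + μ / α + μ) := by field_simp; ring
  rw [reflectionRatio, hnum, hden, mul_div_mul_left _ _ hα]

lemma abs_one_sub_div_sq_sub_le {x μ : ℝ} (hx₀ : 0 ≤ x) (hx₁ : x ≤ 1) (hμ : 0 ≤ μ) :
    |((1 - x) / (1 + x + μ)) ^ 2 - (1 - 4 * x)| ≤ 2 * μ + 8 * x ^ 2 + 4 * x * μ := by
  set r := (1 - x) / (1 + x + μ)
  have hD : 0 < 1 + x + μ := by positivity
  have hr : |r| ≤ 1 := by
    rw [abs_of_nonneg (div_nonneg (by linarith) hD.le)]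
    exact (div_le_one hD).2 (by linarith)
  have hr_sub : |r - (1 - 2 * x)| ≤ μ + 2 * x ^ 2 + 2 * x * μ := by
    have : r - (1 - 2 * x) = (2 * x ^ 2 + 2 * x * μ - μ) / (1 + x + μ) := by
      simp only [r]; field_simp; ring
    rw [this, abs_div, abs_of_pos hD, div_le_iff₀ hD, abs_le]
    constructor <;> nlinarith [mul_nonneg hx₀ hμ, mul_nonneg (mul_nonneg hx₀ hμ) hμ,
      pow_nonneg hx₀ 3, mul_nonneg (sq_nonneg x) hμ]
  have hc : |1 - 2 * x| ≤ 1 := abs_le.2 ⟨by linarith, by linarith⟩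
  calc |r ^ 2 - (1 - 4 * x)| = |(r - (1 - 2 * x)) * (r + (1 - 2 * x)) + 4 * x ^ 2| := by
        ring_nf
    _ ≤ |r - (1 - 2 * x)| * (|r| + |1 - 2 * x|) + 4 * x ^ 2 := by
        grw [abs_add_le, abs_mul, abs_add_le r, abs_of_nonneg (by positivity : 0 ≤ 4 * x ^ 2)]
    _ ≤ (μ + 2 * x ^ 2 + 2 * x * μ) * 2 + 4 * x ^ 2 := by
        gcongr; linarith
    _ = 2 * μ + 8 * x ^ 2 + 4 * x * μ := by ring

lemma one_div_sq_pow_le_one {lam : ℝ} (hlam : 1 ≤ lam) (n : ℕ) : (1 / lam ^ 2) ^ n ≤ 1 :=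
  pow_le_one₀ (by positivity) ((div_le_one (by positivity)).2 (one_le_pow₀ hlam))

lemma abs_one_div_sq_pow_sub_one_le {lam : ℝ} (hlam : 1 ≤ lam) (n : ℕ) :
    |(1 / lam ^ 2) ^ n - 1| ≤ 2 * n * (lam - 1) := by
  have hlam₀ : 0 < lam := by linarith
  have hP : (1 / lam ^ 2) ^ n = (1 + -((lam - 1) / lam)) ^ (2 * n) := by
    rw [pow_mul]; congr 1; field_simp; ring
  have hle := one_div_sq_pow_le_one hlam n
  have hq : (lam - 1) / lam ≤ lam - 1 := div_le_self (by linarith) hlam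
  have hq₁ : (lam - 1) / lam ≤ 1 := (div_le_one hlam₀).2 (by linarith)
  have hbern := one_add_mul_le_pow (a := -((lam - 1) / lam)) (by linarith) (2 * n)
  rw [abs_of_nonpos (by linarith), ← hP] at *
  push_cast at hbern
  nlinarith [(Nat.cast_nonneg n : (0 : ℝ) ≤ n)]

lemma abs_mul_sub_le_of_abs_le_one {R P c : ℝ} (hP : |P| ≤ 1) (hc : |c| ≤ 1) :
    |R * P - c| ≤ |R - c| + |P - 1| :=
  calc |R * P - c| = |(R - c) * P + c * (P - 1)| := by ring_nf
    _ ≤ |R - c| * |P| + |c| * |P - 1| := by grw [abs_add_le, abs_mul, abs_mul]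
    _ ≤ |R - c| + |P - 1| := by
        gcongr
        · exact mul_le_of_le_one_right (abs_nonneg _) hP
        · exact mul_le_of_le_one_left (abs_nonneg _) hc

lemma div_sq_div_mem_Icc {t m μ : ℝ} (ht : 0 < t) (hm : 0 < m) (hμ₁ : t ^ 3 ≤ μ)
    (hμ₂ : μ ≤ t ^ 3 + t ^ 6) : μ / (t ^ 2 / m) ∈ Set.Icc (m * t) (m * t + m * t ^ 4) := by
  rw [div_div_eq_mul_div, Set.mem_Icc, le_div_iff₀ (by positivity), div_le_iff₀ (by positivity)]
  constructor <;> nlinarith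

lemma abs_reflectionRatio_sq_mul_sub_le {t m μ : ℝ} {n : ℕ} (ht : 0 < t) (hm : 1 ≤ m)
    (hmn : m ≤ n) (hnt : 2 * n * t ≤ 1) (hμ₁ : t ^ 3 ≤ μ) (hμ₂ : μ ≤ t ^ 3 + t ^ 6) :
    |reflectionRatio (t ^ 2 / m) (1 + μ) ^ 2 * (1 / (1 + μ) ^ 2) ^ n - (1 - 4 * m * t)|
      ≤ (4 + 32 * n ^ 2 + 24 * n) * t ^ 2 := by
  have hμ : 0 ≤ μ := (pow_nonneg ht.le 3).trans hμ₁
  have hmt : 2 * m * t ≤ 1 := by nlinarith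
  have ht₁ : t ≤ 1 := by nlinarith
  obtain ⟨hx₁, hx₂⟩ := div_sq_div_mem_Icc ht (zero_lt_one.trans_le hm) hμ₁ hμ₂
  set x := μ / (t ^ 2 / m)
  have ht₄ : t ^ 4 ≤ t ^ 2 := pow_le_pow_of_le_one ht.le ht₁ (by norm_num)
  have hmt₀ : 0 ≤ m * t := mul_nonneg (by linarith) ht.le
  have hx₃ : x ≤ 2 * m * t := by nlinarith
  have hP : |(1 / (1 + μ) ^ 2) ^ n| ≤ 1 :=
    abs_le.2 ⟨by linarith [show 0 ≤ (1 / (1 + μ) ^ 2) ^ n by positivity],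
      one_div_sq_pow_le_one (by linarith) n⟩
  have hc : |1 - 4 * m * t| ≤ 1 := abs_le.2 ⟨by linarith, by linarith⟩
  have hR := abs_one_sub_div_sq_sub_le (x := x) (by linarith) (by linarith) hμ
  have hx_sub : |x - m * t| ≤ m * t ^ 4 := abs_le.2 ⟨by linarith, by linarith⟩
  have hPsub := abs_one_div_sq_pow_sub_one_le (lam := 1 + μ) (by linarith) n
  rw [add_sub_cancel_left] at hPsub
  rw [reflectionRatio_one_add μ (by positivity)]
  calc _ ≤ |((1 - x) / (1 + x + μ)) ^ 2 - (1 - 4 * m * t)| + |(1 / (1 + μ) ^ 2) ^ n - 1| :=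
        abs_mul_sub_le_of_abs_le_one hP hc
    _ ≤ (|((1 - x) / (1 + x + μ)) ^ 2 - (1 - 4 * x)| + 4 * |x - m * t|) + 2 * n * μ := by
        gcongr
        rw [show ((1 - x) / (1 + x + μ)) ^ 2 - (1 - 4 * m * t)
          = (((1 - x) / (1 + x + μ)) ^ 2 - (1 - 4 * x)) + 4 * (m * t - x) by ring]
        grw [abs_add_le, abs_mul, abs_sub_comm (m * t),
          abs_of_pos (show (0 : ℝ) < 4 by norm_num)]
    _ ≤ (2 * μ + 8 * x ^ 2 + 4 * x * μ + 4 * (m * t ^ 4)) + 2 * n * μ := by gcongr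
    _ ≤ (4 + 32 * n ^ 2 + 24 * n) * t ^ 2 := by
        have ht₃ : t ^ 3 ≤ t ^ 2 := pow_le_pow_of_le_one ht.le ht₁ (by norm_num)
        have hμt : μ ≤ 2 * t ^ 2 := by nlinarith
        have hxn : x ≤ 2 * n * t := by nlinarith
        have hx₀ : 0 ≤ x := by linarith
        have hn₀ : (0 : ℝ) ≤ n := n.cast_nonneg
        nlinarith [pow_le_pow_left₀ hx₀ hxn 2, mul_le_mul hxn hμt hμ (by positivity),
          mul_le_mul hmn ht₄ (by positivity) hn₀, mul_le_mul_of_nonneg_left hμt hn₀,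
          mul_le_mul_of_nonneg_left ht₃ hn₀]

lemma pow_rpow_one_div {x : ℝ} (hx : 0 ≤ x) {k : ℕ} (hk : k ≠ 0) :
    (x ^ k) ^ ((1 : ℝ) / k) = x := by
  rw [one_div]; exact Real.pow_rpow_inv_natCast hx hk

theorem rhon_optimized_asymptotics_general (n : ℕ) (hn : 1 ≤ n) :
    ∃ C > (0 : ℝ), ∃ ε₀ > (0 : ℝ), ∀ ε : ℝ, 0 < ε → ε < ε₀ →
      |(((ε / n) ^ ((1 : ℝ) / 3) + 1 - lam1Zero ε) /
            ((1 + (ε / n) ^ ((1 : ℝ) / 3)) * lam1Zero ε - 1)) ^ 2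
          * (1 / (lam1Zero ε) ^ 2) ^ n
        - (1 - 4 * (n : ℝ) ^ ((1 : ℝ) / 3) * ε ^ ((1 : ℝ) / 6))| ≤ C * ε ^ ((1 : ℝ) / 3) := by
  have hn₁ : (1 : ℝ) ≤ n := by exact_mod_cast hn
  have hn₀ : (0 : ℝ) < n := by linarith
  refine ⟨4 + 32 * n ^ 2 + 24 * n, by positivity, (1 / (2 * n)) ^ 6, by positivity,
    fun ε hε hε₀ => ?_⟩
  obtain ⟨t, ht, rfl⟩ : ∃ t, 0 < t ∧ ε = t ^ 6 :=
    ⟨ε ^ ((6 : ℕ)⁻¹ : ℝ), by positivity, (Real.rpow_inv_natCast_pow hε.le (by norm_num)).symm⟩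
  have hnt : 2 * n * t ≤ 1 := by
    have := (pow_lt_pow_iff_left₀ ht.le (by positivity) (by norm_num)).1 hε₀
    rw [lt_div_iff₀ (by positivity)] at this
    linarith
  have hsixth : (t ^ 6) ^ ((1 : ℝ) / 6) = t := by
    simpa using pow_rpow_one_div ht.le (k := 6) (by norm_num)
  have hthird : (t ^ 6) ^ ((1 : ℝ) / 3) = t ^ 2 := by
    rw [show t ^ 6 = (t ^ 2) ^ 3 by ring]
    simpa using pow_rpow_one_div (pow_nonneg ht.le 2) (k := 3) (by norm_num)
  rw [Real.div_rpow (by positivity) hn₀.le, hsixth, hthird]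
  obtain ⟨hμ₁, hμ₂⟩ := lam1Zero_pow_six_sub_one_mem_Icc ht.le
  rw [← add_sub_cancel 1 (lam1Zero (t ^ 6))]
  exact abs_reflectionRatio_sq_mul_sub_le ht (Real.one_le_rpow hn₁ (by norm_num))
    (Real.rpow_le_self_of_one_le hn₁ (by norm_num)) hnt hμ₁ hμ₂

/-- For an integer overlap `n ≥ 1` and `a > 0`, with `b = -(2 + ε)a` and the asymptotically
optimized parameter `α*ₙ(ε) = (ε/n)^{1/3}` (and `β = -α*ₙ`), the modulus of the OWR
convergence factor at `s = 0`, namely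
`|ρ_n(0, α*ₙ, -α*ₙ)| = ((α*ₙ+1-λ₁(0))/((1+α*ₙ)λ₁(0)-1))² (1/λ₁(0)²)ⁿ`, satisfies
`|ρ_n(0, α*ₙ(ε), -α*ₙ(ε))| = 1 - 4 n^{1/3} ε^{1/6} + O(ε^{1/3})` as `ε → 0⁺`. -/
theorem rhon_optimized_asymptotics (a : ℝ) (n : ℕ) (hn : 1 ≤ n) (ha : 0 < a) :
    ∃ C > (0 : ℝ), ∃ ε₀ > (0 : ℝ), ∀ ε : ℝ, 0 < ε → ε < ε₀ →
      |(((ε / n) ^ ((1 : ℝ) / 3) + 1 - lam1Zero ε) /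
            ((1 + (ε / n) ^ ((1 : ℝ) / 3)) * lam1Zero ε - 1)) ^ 2
          * (1 / (lam1Zero ε) ^ 2) ^ n
        - (1 - 4 * (n : ℝ) ^ ((1 : ℝ) / 3) * ε ^ ((1 : ℝ) / 6))| ≤ C * ε ^ ((1 : ℝ) / 3) :=
  rhon_optimized_asymptotics_general n hn
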